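/- arXiv:1304.4073 — 7 statements merged into one kernel-verified Lean document; each statement's English description precedes it below -/
import Mathlib

section
/- Let X, Y be vectors in ℝ^n and X', Y' vectors in ℝ^2, all with nonnegative entries. Define X ⪯ₛ Y to mean: for every k, the sum of the k largest entries of X is at most the sum of the k largest entries of Y. If X ⪯ₛ Y and X' ⪯ₛ Y', then the concatenation (X, X') ⪯ₛ (Y, Y'). -/
/-! A `k`-subset of the concatenated index set splits into an `a`-subset of the first block and a
`b`-subset of the second with `a + b = k`, so `topSum (X, X') k ≤ topSum X a + topSum X' b`.
Conversely, optimal subsets of the two blocks stay disjoint in the concatenation, so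
`topSum Y a + topSum Y' b ≤ topSum (Y, Y') k`; the hypotheses bridge the two at `(a, b)`. -/

/-- The sum of the `k` largest entries of a finite real vector, expressed as the
supremum over all subsets of cardinality `k` of the sum of the entries on that subset. -/
noncomputable def topSum {n : ℕ} (X : Fin n → ℝ) (k : ℕ) : ℝ :=
  sSup {v : ℝ | ∃ s : Finset (Fin n), s.card = k ∧ v = ∑ i ∈ s, X i}

section topSum

variable {n m : ℕ}

lemma finite_setOf_sum_card_eq (X : Fin n → ℝ) (k : ℕ) :
    {v : ℝ | ∃ s : Finset (Fin n), s.card = k ∧ v = ∑ i ∈ s, X i}.Finite :=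
  (Set.finite_range fun s : Finset (Fin n) => ∑ i ∈ s, X i).subset
    fun _ ⟨s, _, hv⟩ => ⟨s, hv.symm⟩

lemma sum_le_topSum (X : Fin n → ℝ) {s : Finset (Fin n)} {k : ℕ} (hs : s.card = k) :
    ∑ i ∈ s, X i ≤ topSum X k :=
  le_csSup (finite_setOf_sum_card_eq X k).bddAbove ⟨s, hs, rfl⟩

lemma exists_card_eq_topSum_eq_sum (X : Fin n → ℝ) {k : ℕ} (hk : k ≤ n) :
    ∃ s : Finset (Fin n), s.card = k ∧ topSum X k = ∑ i ∈ s, X i := by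
  obtain ⟨t, -, ht⟩ := Finset.exists_subset_card_eq (s := (Finset.univ : Finset (Fin n))) (n := k)
    (by simpa using hk)
  have hne : {v : ℝ | ∃ s : Finset (Fin n), s.card = k ∧ v = ∑ i ∈ s, X i}.Nonempty :=
    ⟨_, t, ht, rfl⟩
  exact hne.csSup_mem (finite_setOf_sum_card_eq X k)

lemma topSum_eq_zero_of_lt (X : Fin n → ℝ) {k : ℕ} (hk : n < k) : topSum X k = 0 := by
  have hempty : {v : ℝ | ∃ s : Finset (Fin n), s.card = k ∧ v = ∑ i ∈ s, X i} = ∅ :=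
    Set.eq_empty_of_forall_notMem fun _ ⟨s, hs, _⟩ =>
      hk.not_ge (hs ▸ (s.card_le_univ.trans_eq (Fintype.card_fin n)))
  rw [topSum, hempty, Real.sSup_empty]

lemma sum_map_finSumFinEquiv_append (X : Fin n → ℝ) (X' : Fin m → ℝ)
    (t : Finset (Fin n ⊕ Fin m)) :
    ∑ i ∈ t.map finSumFinEquiv.toEmbedding, Fin.append X X' i =
      ∑ i ∈ t.toLeft, X i + ∑ i ∈ t.toRight, X' i := by
  conv_lhs => rw [← t.toLeft_disjSum_toRight]
  simp [Finset.sum_disjSum]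

lemma exists_topSum_append_le_add (X : Fin n → ℝ) (X' : Fin m → ℝ) {k : ℕ} (hk : k ≤ n + m) :
    ∃ a b, a ≤ n ∧ b ≤ m ∧ a + b = k ∧
      topSum (Fin.append X X') k ≤ topSum X a + topSum X' b := by
  obtain ⟨s, hs, hsum⟩ := exists_card_eq_topSum_eq_sum (Fin.append X X') hk
  set t := s.map finSumFinEquiv.symm.toEmbedding
  have hst : t.map finSumFinEquiv.toEmbedding = s := by simp [t, Finset.map_map]
  refine ⟨t.toLeft.card, t.toRight.card, by simpa using t.toLeft.card_le_univ,
    by simpa using t.toRight.card_le_univ, by simp [t, Finset.card_toLeft_add_card_toRight, hs], ?_⟩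
  rw [hsum, ← hst, sum_map_finSumFinEquiv_append]
  exact add_le_add (sum_le_topSum X rfl) (sum_le_topSum X' rfl)

lemma topSum_add_topSum_le_topSum_append (Y : Fin n → ℝ) (Y' : Fin m → ℝ) {a b : ℕ}
    (ha : a ≤ n) (hb : b ≤ m) :
    topSum Y a + topSum Y' b ≤ topSum (Fin.append Y Y') (a + b) := by
  obtain ⟨u, hu, hYu⟩ := exists_card_eq_topSum_eq_sum Y ha
  obtain ⟨u', hu', hYu'⟩ := exists_card_eq_topSum_eq_sum Y' hb
  have hsum := sum_map_finSumFinEquiv_append Y Y' (u.disjSum u')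
  rw [Finset.toLeft_disjSum, Finset.toRight_disjSum] at hsum
  rw [hYu, hYu', ← hsum]
  exact sum_le_topSum _ (by simp [hu, hu'])

end topSum

theorem concat_prefix_dominance_general (n : ℕ) (X Y : Fin n → ℝ) (X' Y' : Fin 2 → ℝ)
    (h1 : ∀ k, topSum X k ≤ topSum Y k)
    (h2 : ∀ k, topSum X' k ≤ topSum Y' k) :
    ∀ k, topSum (Fin.append X X') k ≤ topSum (Fin.append Y Y') k := by
  intro k
  by_cases hk : k ≤ n + 2
  · obtain ⟨a, b, ha, hb, rfl, hsplit⟩ := exists_topSum_append_le_add X X' hk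
    calc topSum (Fin.append X X') (a + b)
        ≤ topSum X a + topSum X' b := hsplit
      _ ≤ topSum Y a + topSum Y' b := add_le_add (h1 a) (h2 b)
      _ ≤ topSum (Fin.append Y Y') (a + b) := topSum_add_topSum_le_topSum_append Y Y' ha hb
  · rw [topSum_eq_zero_of_lt _ (by omega), topSum_eq_zero_of_lt _ (by omega)]

/-- If `X ⪯ₛ Y` (every `k`-largest-entries prefix sum of `X` is at most that of `Y`)
and `X' ⪯ₛ Y'` for two-dimensional `X'`, `Y'`, then the concatenations satisfy
`(X, X') ⪯ₛ (Y, Y')`. -/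
theorem concat_prefix_dominance (n : ℕ) (X Y : Fin n → ℝ) (X' Y' : Fin 2 → ℝ)
    (hX : ∀ i, 0 ≤ X i) (hY : ∀ i, 0 ≤ Y i) (hX' : ∀ i, 0 ≤ X' i) (hY' : ∀ i, 0 ≤ Y' i)
    (h1 : ∀ k, topSum X k ≤ topSum Y k)
    (h2 : ∀ k, topSum X' k ≤ topSum Y' k) :
    ∀ k, topSum (Fin.append X X') k ≤ topSum (Fin.append Y Y') k :=
  concat_prefix_dominance_general n X Y X' Y' h1 h2
end

section
/- Let s₁ ≥ s₂ ≥ ⋯ ≥ s_m > 0 be machine speeds and suppose L₁ ≥ L₂ ≥ ⋯ ≥ L_m ≥ 0 satisfy Σᵢ sᵢ Lᵢ ≥ 1. If i is an index with i ≤ (Σ_{k=1}^m s_k)/s₁, then L₁ + L₂ + ⋯ + Lᵢ ≥ i / (Σ_{k=1}^m s_k). -/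
/-- For speeds `s₁ ≥ ⋯ ≥ s_m > 0` and nonincreasing nonnegative loads
`L₁ ≥ ⋯ ≥ L_m ≥ 0` with `Σᵢ sᵢ Lᵢ ≥ 1`: if `i ≤ (Σ_k s_k)/s₁`, then
`L₁ + ⋯ + Lᵢ ≥ i / (Σ_k s_k)`. -/
theorem regular_prefix_lower_small (m : ℕ) (hm : 1 ≤ m) (s L : ℕ → ℝ)
    (hs : ∀ i j, 1 ≤ i → i ≤ j → j ≤ m → s j ≤ s i)
    (hspos : ∀ i, 1 ≤ i → i ≤ m → 0 < s i)
    (hL : ∀ i j, 1 ≤ i → i ≤ j → j ≤ m → L j ≤ L i)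
    (hL0 : ∀ i, 1 ≤ i → i ≤ m → 0 ≤ L i)
    (hfeas : 1 ≤ ∑ i ∈ Finset.Icc 1 m, s i * L i)
    (i : ℕ) (hi1 : 1 ≤ i) (him : i ≤ m)
    (hcond : (i : ℝ) ≤ (∑ k ∈ Finset.Icc 1 m, s k) / s 1) :
    (i : ℝ) / (∑ k ∈ Finset.Icc 1 m, s k) ≤ ∑ k ∈ Finset.Icc 1 i, L k := by
  set S := ∑ k ∈ Finset.Icc 1 m, s k with hSdef
  have hs1 : 0 < s 1 := hspos 1 le_rfl hm
  have hSpos : 0 < S := by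
    apply Finset.sum_pos
    · intro k hk
      rw [Finset.mem_Icc] at hk
      exact hspos k hk.1 hk.2
    · exact ⟨1, Finset.mem_Icc.mpr ⟨le_rfl, hm⟩⟩
  have hcond' : (i : ℝ) * s 1 ≤ S := (le_div_iff₀ hs1).mp hcond
  set d : ℕ → ℝ := fun t => if t = m then L m else L t - L (t + 1) with hddef
  have hd0 : ∀ t, 1 ≤ t → t ≤ m → 0 ≤ d t := by
    intro t ht1 htm
    by_cases h : t = m
    · simp [hddef, h]
      exact hL0 m hm le_rfl
    · have htm' : t + 1 ≤ m := by omega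
      simp only [hddef, if_neg h]
      have := hL t (t + 1) ht1 (by omega) htm'
      linarith
  -- telescoping
  have tele : ∀ j k, 1 ≤ k → k ≤ m → m - k = j →
      (∑ t ∈ Finset.Icc k m, d t) = L k := by
    intro j
    induction j with
    | zero =>
      intro k hk1 hkm hj
      have hk : k = m := by omega
      subst hk
      rw [Finset.Icc_self, Finset.sum_singleton]
      simp [hddef]
    | succ n ih =>
      intro k hk1 hkm hj
      have hklt : k < m := by omega
      rw [Finset.Icc_eq_cons_Ioc (le_of_lt hklt), Finset.sum_cons,
        ← Finset.Icc_add_one_left_eq_Ioc, ih (k + 1) (by omega) (by omega) (by omega)]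
      have hkne : k ≠ m := by omega
      simp only [hddef, if_neg hkne]
      ring
  -- rewrite L k as a full-range sum with ite
  have tele' : ∀ k, 1 ≤ k → k ≤ m →
      L k = ∑ t ∈ Finset.Icc 1 m, (if k ≤ t then d t else 0) := by
    intro k hk1 hkm
    rw [Finset.sum_ite, Finset.sum_const_zero, add_zero]
    have hfil : (Finset.Icc 1 m).filter (fun t => k ≤ t) = Finset.Icc k m := by
      ext t
      simp only [Finset.mem_filter, Finset.mem_Icc]
      omega
    rw [hfil, tele (m - k) k hk1 hkm rfl]
  -- prefix sum identity
  have hB : (∑ k ∈ Finset.Icc 1 i, L k)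
      = ∑ t ∈ Finset.Icc 1 m, ((min t i : ℕ) : ℝ) * d t := by
    have h1 : (∑ k ∈ Finset.Icc 1 i, L k)
        = ∑ k ∈ Finset.Icc 1 i, ∑ t ∈ Finset.Icc 1 m, (if k ≤ t then d t else 0) := by
      apply Finset.sum_congr rfl
      intro k hk
      rw [Finset.mem_Icc] at hk
      exact tele' k hk.1 (le_trans hk.2 him)
    rw [h1, Finset.sum_comm]
    apply Finset.sum_congr rfl
    intro t ht
    rw [Finset.sum_ite, Finset.sum_const_zero, add_zero, Finset.sum_const]
    have hfil : (Finset.Icc 1 i).filter (fun k => k ≤ t) = Finset.Icc 1 (min t i) := by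
      ext k
      simp only [Finset.mem_filter, Finset.mem_Icc]
      omega
    rw [hfil, Nat.card_Icc]
    simp [nsmul_eq_mul]
  -- weighted sum identity
  have hW : (∑ k ∈ Finset.Icc 1 m, s k * L k)
      = ∑ t ∈ Finset.Icc 1 m, (∑ k ∈ Finset.Icc 1 t, s k) * d t := by
    have h1 : (∑ k ∈ Finset.Icc 1 m, s k * L k)
        = ∑ k ∈ Finset.Icc 1 m, ∑ t ∈ Finset.Icc 1 m, (if k ≤ t then s k * d t else 0) := by
      apply Finset.sum_congr rfl
      intro k hk
      rw [Finset.mem_Icc] at hk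
      rw [tele' k hk.1 hk.2, Finset.mul_sum]
      apply Finset.sum_congr rfl
      intro t _
      split <;> simp
    rw [h1, Finset.sum_comm]
    apply Finset.sum_congr rfl
    intro t ht
    rw [Finset.mem_Icc] at ht
    rw [Finset.sum_ite, Finset.sum_const_zero, add_zero]
    have hfil : (Finset.Icc 1 m).filter (fun k => k ≤ t) = Finset.Icc 1 t := by
      ext k
      simp only [Finset.mem_filter, Finset.mem_Icc]
      omega
    rw [hfil, ← Finset.sum_mul]
  -- key inequality: i * Σ s L ≤ S * B
  have hkey : (i : ℝ) * (∑ k ∈ Finset.Icc 1 m, s k * L k)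
      ≤ S * (∑ k ∈ Finset.Icc 1 i, L k) := by
    rw [hW, hB, Finset.mul_sum, Finset.mul_sum]
    apply Finset.sum_le_sum
    intro t ht
    rw [Finset.mem_Icc] at ht
    rw [← mul_assoc, ← mul_assoc]
    apply mul_le_mul_of_nonneg_right _ (hd0 t ht.1 ht.2)
    -- show i * S_t ≤ S * min t i
    by_cases hti : t ≤ i
    · have hmin : min t i = t := min_eq_left hti
      rw [hmin]
      have hSt : (∑ k ∈ Finset.Icc 1 t, s k) ≤ (t : ℝ) * s 1 := by
        calc (∑ k ∈ Finset.Icc 1 t, s k) ≤ ∑ k ∈ Finset.Icc 1 t, s 1 := by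
              apply Finset.sum_le_sum
              intro k hk
              rw [Finset.mem_Icc] at hk
              exact hs 1 k le_rfl hk.1 (le_trans hk.2 ht.2)
          _ = (t : ℝ) * s 1 := by
              rw [Finset.sum_const, Nat.card_Icc]
              simp [nsmul_eq_mul]
      have hti' : (t : ℝ) ≤ (i : ℝ) := by exact_mod_cast hti
      have hipos : (0:ℝ) < i := by exact_mod_cast hi1
      have htpos : (0:ℝ) ≤ t := by positivity
      calc (i : ℝ) * (∑ k ∈ Finset.Icc 1 t, s k) ≤ (i : ℝ) * ((t : ℝ) * s 1) := by
            apply mul_le_mul_of_nonneg_left hSt (le_of_lt hipos)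
        _ = (t : ℝ) * ((i : ℝ) * s 1) := by ring
        _ ≤ (t : ℝ) * S := mul_le_mul_of_nonneg_left hcond' htpos
        _ = S * (t : ℝ) := by ring
    · have hmin : min t i = i := min_eq_right (by omega)
      rw [hmin]
      have hSt : (∑ k ∈ Finset.Icc 1 t, s k) ≤ S := by
        apply Finset.sum_le_sum_of_subset_of_nonneg
        · exact Finset.Icc_subset_Icc_right ht.2
        · intro k hk _
          rw [Finset.mem_Icc] at hk
          exact le_of_lt (hspos k hk.1 hk.2)
      have hipos : (0:ℝ) ≤ i := by positivity
      calc (i : ℝ) * (∑ k ∈ Finset.Icc 1 t, s k) ≤ (i : ℝ) * S :=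
            mul_le_mul_of_nonneg_left hSt hipos
        _ = S * (i : ℝ) := by ring
  -- conclude
  rw [div_le_iff₀ hSpos]
  have hipos : (0:ℝ) ≤ i := by positivity
  calc (i : ℝ) = (i : ℝ) * 1 := by ring
    _ ≤ (i : ℝ) * (∑ k ∈ Finset.Icc 1 m, s k * L k) :=
        mul_le_mul_of_nonneg_left hfeas hipos
    _ ≤ S * (∑ k ∈ Finset.Icc 1 i, L k) := hkey
    _ = (∑ k ∈ Finset.Icc 1 i, L k) * S := by ring
end

section
/- Let s₁ ≥ s₂ ≥ ⋯ ≥ s_m > 0, set s_{m+1} = 0, and write (Σ_{i=1}^m s_i)/s₁ = t + Δ where t ∈ {1, …, m} is an integer and 0 ≤ Δ < 1. If L₁ ≥ ⋯ ≥ L_m ≥ 0 satisfy Σ_{k=1}^i L_k ≤ α·i/(Σ_{k=1}^m s_k) for all i ≤ t, and Σ_{k=1}^i L_k ≤ α/s₁ for all i with t < i ≤ m, and Σᵢ sᵢLᵢ = 1, then α ≥ (Σ_{i=1}^m s_i)/(Σ_{i=1}^t s_i + Δ·s_{t+1}). -/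
/-!
Abel summation writes `∑ sᵢ Lᵢ` as `∑ (sᵢ - sᵢ₊₁) (L₁ + ⋯ + Lᵢ)` with nonnegative
weights `sᵢ - sᵢ₊₁`. Since `∑ s / s₁ = t + Δ`, both prefix bounds say
`L₁ + ⋯ + Lᵢ ≤ α / ∑ s · min(i, t + Δ)`, and the same summation evaluates
`∑ (sᵢ - sᵢ₊₁) min(i, t + Δ)` to `∑_{i ≤ t} sᵢ + Δ s_{t+1}`.
Hence `1 ≤ α (∑_{i ≤ t} sᵢ + Δ s_{t+1}) / ∑ s`.
-/

open Finset

section Abel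

variable {R : Type*} [CommRing R]

theorem sum_Icc_sub_mul_sum_Icc (s L : ℕ → R) (n : ℕ) :
    ∑ i ∈ Icc 1 n, (s i - s (i + 1)) * ∑ k ∈ Icc 1 i, L k
      = ∑ i ∈ Icc 1 n, s i * L i - s (n + 1) * ∑ k ∈ Icc 1 n, L k := by
  induction n with
  | zero => simp
  | succ n ih =>
    simp only [sum_Icc_succ_top (Nat.le_add_left 1 n), ih]
    ring

theorem sum_Icc_sub_mul_natCast (s : ℕ → R) (n : ℕ) :
    ∑ i ∈ Icc 1 n, (s i - s (i + 1)) * (i : R) = ∑ i ∈ Icc 1 n, s i - n * s (n + 1) := by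
  simpa [mul_comm] using sum_Icc_sub_mul_sum_Icc s (fun _ ↦ (1 : R)) n

theorem sum_Ioc_sub_succ (s : ℕ → R) {a n : ℕ} (han : a ≤ n) :
    ∑ i ∈ Ioc a n, (s i - s (i + 1)) = s (a + 1) - s (n + 1) := by
  rw [← Ico_add_one_add_one_eq_Ioc, ← neg_sub, ← sum_Ico_sub (f := s) (by omega),
    ← sum_neg_distrib]
  simp only [neg_sub]

end Abel

section Ordered

variable {R : Type*} [CommRing R] [LinearOrder R] [IsStrictOrderedRing R]

theorem min_natCast_eq_left_of_le {i t : ℕ} {c : R} (htc : (t : R) ≤ c) (hit : i ≤ t) :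
    min (i : R) c = i :=
  min_eq_left ((Nat.cast_le.2 hit).trans htc)

theorem min_natCast_eq_right_of_lt {i t : ℕ} {c : R} (hct : c ≤ t + 1) (hti : t < i) :
    min (i : R) c = c :=
  min_eq_right (hct.trans (by exact_mod_cast hti))

theorem sum_Icc_mul_le_sum_Icc_sub_mul {s L F : ℕ → R} {n : ℕ}
    (hs : ∀ i ∈ Icc 1 n, s (i + 1) ≤ s i) (hsn : s (n + 1) = 0)
    (hLF : ∀ i ∈ Icc 1 n, ∑ k ∈ Icc 1 i, L k ≤ F i) :
    ∑ i ∈ Icc 1 n, s i * L i ≤ ∑ i ∈ Icc 1 n, (s i - s (i + 1)) * F i := by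
  have abel := sum_Icc_sub_mul_sum_Icc s L n
  rw [hsn, zero_mul, sub_zero] at abel
  rw [← abel]
  exact sum_le_sum fun i hi ↦ mul_le_mul_of_nonneg_left (hLF i hi) (sub_nonneg.2 (hs i hi))

theorem sum_Icc_sub_mul_min (s : ℕ → R) {t m : ℕ} {c : R} (htm : t ≤ m)
    (htc : (t : R) ≤ c) (hct : c ≤ t + 1) :
    ∑ i ∈ Icc 1 m, (s i - s (i + 1)) * min (i : R) c
      = ∑ i ∈ Icc 1 t, s i + (c - t) * s (t + 1) - c * s (m + 1) := by
  have hsplit := sum_Ioc_consecutive (fun i ↦ (s i - s (i + 1)) * min (i : R) c)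
    (Nat.zero_le t) htm
  rw [← Icc_add_one_left_eq_Ioc 0 t, ← Icc_add_one_left_eq_Ioc 0 m, zero_add] at hsplit
  rw [← hsplit]
  have low : ∑ i ∈ Icc 1 t, (s i - s (i + 1)) * min (i : R) c
      = ∑ i ∈ Icc 1 t, (s i - s (i + 1)) * (i : R) := by
    exact sum_congr rfl fun i hi ↦ by rw [min_natCast_eq_left_of_le htc (mem_Icc.1 hi).2]
  have high : ∑ i ∈ Ioc t m, (s i - s (i + 1)) * min (i : R) c
      = ∑ i ∈ Ioc t m, (s i - s (i + 1)) * c := by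
    exact sum_congr rfl fun i hi ↦ by rw [min_natCast_eq_right_of_lt hct (mem_Ioc.1 hi).1]
  rw [low, high, ← sum_mul, sum_Icc_sub_mul_natCast, sum_Ioc_sub_succ s htm]
  ring

end Ordered

theorem div_le_of_one_le_div_mul {K : Type*} [Field K] [LinearOrder K] [IsStrictOrderedRing K]
    {a b c : K} (ha : 0 < a) (hb : 0 ≤ b) (h : 1 ≤ c / a * b) : a / b ≤ c := by
  have hb : 0 < b := hb.lt_of_ne fun hb ↦ by rw [← hb, mul_zero] at h; linarith
  rw [div_le_iff₀ hb]
  exact (one_le_div ha).1 (by rwa [div_mul_eq_mul_div] at h)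

theorem war_fractional_lower_general (m t : ℕ) (s L : ℕ → ℝ) (α Δ : ℝ)
    (hm : 1 ≤ m)
    (hs : ∀ i j, 1 ≤ i → i ≤ j → j ≤ m → s j ≤ s i)
    (hspos : ∀ i, 1 ≤ i → i ≤ m → 0 < s i)
    (hstop : s (m + 1) = 0)
    (htm : t ≤ m)
    (hΔ0 : 0 ≤ Δ) (hΔ1 : Δ < 1)
    (hdec : (∑ i ∈ Finset.Icc 1 m, s i) / s 1 = (t : ℝ) + Δ)
    (h1 : ∀ i, 1 ≤ i → i ≤ t →
      ∑ k ∈ Finset.Icc 1 i, L k ≤ α * i / (∑ k ∈ Finset.Icc 1 m, s k))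
    (h2 : ∀ i, t < i → i ≤ m → ∑ k ∈ Finset.Icc 1 i, L k ≤ α / s 1)
    (heq : ∑ i ∈ Finset.Icc 1 m, s i * L i = 1) :
    (∑ i ∈ Finset.Icc 1 m, s i) / (∑ i ∈ Finset.Icc 1 t, s i + Δ * s (t + 1)) ≤ α := by
  set S := ∑ i ∈ Icc 1 m, s i
  set D := ∑ i ∈ Icc 1 t, s i + Δ * s (t + 1)
  have hs1 : 0 < s 1 := hspos 1 le_rfl hm
  have hS : 0 < S := sum_pos (fun i hi ↦ hspos i (mem_Icc.1 hi).1 (mem_Icc.1 hi).2)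
    ⟨1, mem_Icc.2 ⟨le_rfl, hm⟩⟩
  have hSt : S = s 1 * (t + Δ) := by
    rw [← hdec, mul_div_cancel₀ _ hs1.ne']
  have hs_succ : ∀ i ∈ Icc 1 m, s (i + 1) ≤ s i := by
    intro i hi
    obtain ⟨hi1, him⟩ := mem_Icc.1 hi
    rcases him.lt_or_eq with him | rfl
    · exact hs i (i + 1) hi1 (by omega) him
    · exact hstop ▸ (hspos i hi1 le_rfl).le
  have hprefix : ∀ i ∈ Icc 1 m, ∑ k ∈ Icc 1 i, L k ≤ α / S * min (i : ℝ) (t + Δ) := by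
    intro i hi
    obtain ⟨hi1, him⟩ := mem_Icc.1 hi
    rcases le_or_gt i t with hit | hti
    · rw [min_natCast_eq_left_of_le (by linarith) hit, ← mul_div_right_comm]
      exact h1 i hi1 hit
    · have htΔ : 0 < (t : ℝ) + Δ := hdec ▸ div_pos hS hs1
      rw [min_natCast_eq_right_of_lt (by linarith) hti, hSt, ← div_div,
        div_mul_cancel₀ _ htΔ.ne']
      exact h2 i hti him
  have key : 1 ≤ α / S * D := calc
    1 = ∑ i ∈ Icc 1 m, s i * L i := heq.symm
    _ ≤ ∑ i ∈ Icc 1 m, (s i - s (i + 1)) * (α / S * min (i : ℝ) (t + Δ)) :=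
        sum_Icc_mul_le_sum_Icc_sub_mul hs_succ hstop hprefix
    _ = α / S * D := by
        simp_rw [mul_left_comm _ (α / S), ← mul_sum]
        rw [sum_Icc_sub_mul_min s htm (by linarith) (by linarith), hstop]
        ring
  have hst : 0 ≤ s (t + 1) := by
    rcases htm.lt_or_eq with htm | rfl
    exacts [(hspos _ (by omega) htm).le, hstop.ge]
  have hD0 : 0 ≤ D := add_nonneg
    (sum_nonneg fun i hi ↦ (hspos i (mem_Icc.1 hi).1 ((mem_Icc.1 hi).2.trans htm)).le)
    (mul_nonneg hΔ0 hst)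
  exact div_le_of_one_le_div_mul hS hD0 key

/-- Lower bound for the weak simultaneous approximation ratio on related machines
with fixed speeds: if `s₁ ≥ ⋯ ≥ s_m > 0`, `s_{m+1} = 0`,
`(Σᵢ sᵢ)/s₁ = t + Δ` with `1 ≤ t ≤ m` and `0 ≤ Δ < 1`, and the nonincreasing
nonnegative loads `L` satisfy the prefix bounds `Σ_{k≤i} L_k ≤ α·i/Σ s_k` for
`i ≤ t`, `Σ_{k≤i} L_k ≤ α/s₁` for `t < i ≤ m`, together with `Σᵢ sᵢLᵢ = 1`, then
`α ≥ (Σᵢ sᵢ)/(Σ_{i≤t} sᵢ + Δ·s_{t+1})`. -/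
theorem war_fractional_lower (m t : ℕ) (s L : ℕ → ℝ) (α Δ : ℝ)
    (hm : 1 ≤ m)
    (hs : ∀ i j, 1 ≤ i → i ≤ j → j ≤ m → s j ≤ s i)
    (hspos : ∀ i, 1 ≤ i → i ≤ m → 0 < s i)
    (hstop : s (m + 1) = 0)
    (ht1 : 1 ≤ t) (htm : t ≤ m)
    (hΔ0 : 0 ≤ Δ) (hΔ1 : Δ < 1)
    (hdec : (∑ i ∈ Finset.Icc 1 m, s i) / s 1 = (t : ℝ) + Δ)
    (hL : ∀ i j, 1 ≤ i → i ≤ j → j ≤ m → L j ≤ L i)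
    (hL0 : ∀ i, 1 ≤ i → i ≤ m → 0 ≤ L i)
    (h1 : ∀ i, 1 ≤ i → i ≤ t →
      ∑ k ∈ Finset.Icc 1 i, L k ≤ α * i / (∑ k ∈ Finset.Icc 1 m, s k))
    (h2 : ∀ i, t < i → i ≤ m → ∑ k ∈ Finset.Icc 1 i, L k ≤ α / s 1)
    (heq : ∑ i ∈ Finset.Icc 1 m, s i * L i = 1) :
    (∑ i ∈ Finset.Icc 1 m, s i) / (∑ i ∈ Finset.Icc 1 t, s i + Δ * s (t + 1)) ≤ α :=
  war_fractional_lower_general m t s L α Δ hm hs hspos hstop htm hΔ0 hΔ1 hdec h1 h2 heq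
end

section
/- Let s₁ ≥ s₂ ≥ ⋯ ≥ s_m > 0, s_{m+1} = 0, and write (Σ_{i=1}^m s_i)/s₁ = t + Δ with t ∈ {1, …, m} an integer and 0 ≤ Δ < 1. Then (Σ_{i=1}^m s_i)/(Σ_{i=1}^t s_i + Δ·s_{t+1}) ≤ (√m + 1)/2. -/
set_option maxHeartbeats 1000000 in
/-- Upper bound over all speed choices: if `s₁ ≥ ⋯ ≥ s_m > 0`, `s_{m+1} = 0`, and
`(Σᵢ sᵢ)/s₁ = t + Δ` with `1 ≤ t ≤ m` an integer and `0 ≤ Δ < 1`, then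
`(Σᵢ sᵢ)/(Σ_{i≤t} sᵢ + Δ·s_{t+1}) ≤ (√m + 1)/2`. -/
theorem war_fractional_upper (m t : ℕ) (s : ℕ → ℝ) (Δ : ℝ)
    (hm : 1 ≤ m)
    (hs : ∀ i j, 1 ≤ i → i ≤ j → j ≤ m → s j ≤ s i)
    (hspos : ∀ i, 1 ≤ i → i ≤ m → 0 < s i)
    (hstop : s (m + 1) = 0)
    (ht1 : 1 ≤ t) (htm : t ≤ m)
    (hΔ0 : 0 ≤ Δ) (hΔ1 : Δ < 1)
    (hdec : (∑ i ∈ Finset.Icc 1 m, s i) / s 1 = (t : ℝ) + Δ) :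
    (∑ i ∈ Finset.Icc 1 m, s i) / (∑ i ∈ Finset.Icc 1 t, s i + Δ * s (t + 1)) ≤
      (Real.sqrt m + 1) / 2 := by
  rcases eq_or_lt_of_le htm with hteq | htlt
  · -- case t = m : ratio is 1
    subst hteq
    rw [hstop, mul_zero, add_zero]
    have hS : 0 < ∑ i ∈ Finset.Icc 1 t, s i := by
      refine Finset.sum_pos (fun i hi => ?_) ⟨1, Finset.mem_Icc.mpr ⟨le_refl 1, ht1⟩⟩
      exact hspos i (Finset.mem_Icc.mp hi).1 (Finset.mem_Icc.mp hi).2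
    rw [div_self (ne_of_gt hS)]
    have h1 : (1:ℝ) ≤ Real.sqrt t := by
      rw [show (1:ℝ) = Real.sqrt 1 by simp]
      exact Real.sqrt_le_sqrt (by exact_mod_cast ht1)
    linarith
  · -- case t < m
    have hm2 : 2 ≤ m := by omega
    have ha : 0 < s 1 := hspos 1 le_rfl hm
    have hc : 0 < s (t + 1) := hspos (t + 1) (by omega) htlt
    -- split the sums
    have hsplit1 : (∑ i ∈ Finset.Icc 1 m, s i)
        = (∑ i ∈ Finset.Icc 1 t, s i) + ∑ i ∈ Finset.Ioc t m, s i := by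
      rw [show Finset.Icc 1 m = Finset.Ioc 0 m from rfl,
          show Finset.Icc 1 t = Finset.Ioc 0 t from rfl]
      exact (Finset.sum_Ioc_consecutive _ (Nat.zero_le t) htm).symm
    have hsplit2 : (∑ i ∈ Finset.Icc 1 t, s i)
        = s 1 + ∑ i ∈ Finset.Ioc 1 t, s i := by
      rw [show Finset.Icc 1 t = Finset.Ioc 0 t from rfl]
      rw [← Finset.sum_Ioc_consecutive _ (Nat.zero_le 1) ht1]
      simp
    set a := s 1 with ha_def
    set c := s (t + 1) with hc_def
    set B := ∑ i ∈ Finset.Ioc 1 t, s i with hB_def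
    set C := ∑ i ∈ Finset.Ioc t m, s i with hC_def
    -- bounds for B and C
    have hB : ((t : ℝ) - 1) * c ≤ B := by
      have h := Finset.card_nsmul_le_sum (Finset.Ioc 1 t) s c
        (fun i hi => by
          have hi' := Finset.mem_Ioc.mp hi
          exact hs i (t + 1) (by omega) (by omega) htlt)
      have hcard : (Finset.Ioc 1 t).card = t - 1 := by simp
      rw [hcard, nsmul_eq_mul] at h
      have : ((t - 1 : ℕ) : ℝ) = (t : ℝ) - 1 := by
        rw [Nat.cast_sub ht1]; norm_num
      linarith [this ▸ h]
    have hC : C ≤ ((m : ℝ) - t) * c := by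
      have h := Finset.sum_le_card_nsmul (Finset.Ioc t m) s c
        (fun i hi => by
          have hi' := Finset.mem_Ioc.mp hi
          exact hs (t + 1) i (by omega) (by omega) hi'.2)
      have hcard : (Finset.Ioc t m).card = m - t := by simp
      rw [hcard, nsmul_eq_mul] at h
      have : ((m - t : ℕ) : ℝ) = (m : ℝ) - t := by
        rw [Nat.cast_sub htm]
      linarith [this ▸ h]
    -- key inequality
    have htm' : (t : ℝ) + 1 ≤ (m : ℝ) := by exact_mod_cast htlt
    have ht1' : (1 : ℝ) ≤ (t : ℝ) := by exact_mod_cast ht1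
    have hkey : ((t : ℝ) - 1 + Δ) * (B + C) ≤ ((m : ℝ) - 1) * (B + Δ * c) := by
      nlinarith [mul_le_mul_of_nonneg_left hC (by linarith : (0:ℝ) ≤ (t:ℝ) - 1 + Δ),
        mul_le_mul_of_nonneg_left hB (by linarith : (0:ℝ) ≤ (m:ℝ) - t - Δ)]
    -- from hdec : total sum equals a * (t + Δ)
    have hSdec : a + B + C = a * ((t : ℝ) + Δ) := by
      have := (div_eq_iff (ne_of_gt ha)).mp hdec
      rw [hsplit1, hsplit2] at this
      linarith
    have hBC : B + C = a * ((t : ℝ) - 1 + Δ) := by nlinarith [hSdec]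
    set u := (t : ℝ) - 1 + Δ with hu_def
    -- denominator positivity
    have hD : 0 < a + B + Δ * c := by
      have hB0 : 0 ≤ B := Finset.sum_nonneg fun i hi => by
        have hi' := Finset.mem_Ioc.mp hi
        exact (hspos i (by omega) (by omega)).le
      positivity
    -- sqrt facts
    set r := Real.sqrt m with hr_def
    have hr2 : r ^ 2 = (m : ℝ) := Real.sq_sqrt (by positivity)
    have hr1 : (1 : ℝ) ≤ r := by
      rw [show (1:ℝ) = Real.sqrt 1 by simp]
      exact Real.sqrt_le_sqrt (by exact_mod_cast hm)
    -- lower bound on (m-1) * D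
    have hlow : a * ((m : ℝ) - 1 + u ^ 2) ≤ ((m : ℝ) - 1) * (a + B + Δ * c) := by
      nlinarith [hkey, hBC]
    -- the AM-GM style bound
    have hquad : 2 * (u + 1) * ((m : ℝ) - 1) ≤ (r + 1) * ((m : ℝ) - 1 + u ^ 2) := by
      have key : (0:ℝ) ≤ (r + 1) * (u - (r - 1)) ^ 2 :=
        mul_nonneg (by linarith) (sq_nonneg _)
      rw [← hr2]
      nlinarith [key]
    rw [hsplit1, hsplit2, div_le_div_iff₀ hD (by norm_num : (0:ℝ) < 2)]
    have hS' : a + B + C = a * (u + 1) := by rw [hu_def]; linarith [hBC]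
    have hm1 : (0:ℝ) < (m:ℝ) - 1 := by
      have : (2:ℝ) ≤ (m:ℝ) := by exact_mod_cast hm2
      linarith
    have h1 : (r + 1) * (a * ((m : ℝ) - 1 + u ^ 2))
        ≤ (r + 1) * (((m : ℝ) - 1) * (a + B + Δ * c)) :=
      mul_le_mul_of_nonneg_left hlow (by linarith)
    have h2 : (2 * (u + 1) * ((m : ℝ) - 1)) * a
        ≤ ((r + 1) * ((m : ℝ) - 1 + u ^ 2)) * a :=
      mul_le_mul_of_nonneg_right hquad ha.le
    have hS'' : (a + B + C) * 2 * ((m:ℝ) - 1) = (2 * (u + 1) * ((m:ℝ) - 1)) * a := by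
      rw [hS']; ring
    have hfin : ((a + B) + C) * 2 * ((m:ℝ) - 1)
        ≤ ((r + 1) * ((a + B) + Δ * c)) * ((m:ℝ) - 1) := by
      nlinarith [h1, h2, hS'']
    exact le_of_mul_le_mul_right hfin hm1
end

section
/- Let m ≥ 2, s = √m + 1, and for x ∈ [0, 1] define f(x) = x(s + m − 1)/s and g(x) = x + s(1 − x). Then max{f(x), g(x)} ≥ (√m + 1)/2 for every x ∈ [0, 1], with equality attained at x = s²/(s² + m − 1). -/
/-!
Write `r = √m`, so `s = r + 1` and `m = r²`. Then `s + m − 1 = r s`, hence `f(x) = r x` and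
`g(x) = s − r x`: the two loads always sum to `s`, so their maximum is at least `s / 2`,
with equality exactly where they balance, `r x = s / 2`, i.e. `x = s / (2r) = s² / (s² + m − 1)`.
-/

lemma half_le_max_of_add_eq {a b c : ℝ} (h : a + b = c) : c / 2 ≤ max a b := by
  rcases le_total a b with hab | hab
  · rw [max_eq_right hab]; linarith
  · rw [max_eq_left hab]; linarith

section

variable {r : ℝ}

lemma fast_load_eq (hr : 0 ≤ r) (x : ℝ) : x * (r + 1 + r ^ 2 - 1) / (r + 1) = r * x := by
  field_simp
  ring

lemma total_load_eq (x : ℝ) : x + (r + 1) * (1 - x) = r + 1 - r * x := by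
  ring

lemma balanced_split_eq (hr : 0 < r) :
    (r + 1) ^ 2 / ((r + 1) ^ 2 + r ^ 2 - 1) = (r + 1) / (2 * r) := by
  rw [show (r + 1) ^ 2 + r ^ 2 - 1 = 2 * r * (r + 1) by ring]
  field_simp

lemma mul_balanced_split_eq (hr : 0 < r) : r * ((r + 1) / (2 * r)) = (r + 1) / 2 := by
  field_simp

end

/-- Lower bound instance on related machines with speeds `s₁ = √m + 1` and
`s₂ = ⋯ = s_m = 1`: with `s = √m + 1`, `f(x) = x(s + m − 1)/s` and
`g(x) = x + s(1 − x)`, we have `max{f(x), g(x)} ≥ (√m + 1)/2` for all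
`x ∈ [0, 1]`, with equality attained at `x = s²/(s² + m − 1)`. -/
theorem war_lower_instance (m : ℕ) (hm : 2 ≤ m) (s : ℝ) (hs : s = Real.sqrt m + 1) :
    (∀ x : ℝ, 0 ≤ x → x ≤ 1 →
      (Real.sqrt m + 1) / 2 ≤ max (x * (s + (m : ℝ) - 1) / s) (x + s * (1 - x))) ∧
    max ((s ^ 2 / (s ^ 2 + (m : ℝ) - 1)) * (s + (m : ℝ) - 1) / s)
        ((s ^ 2 / (s ^ 2 + (m : ℝ) - 1)) + s * (1 - s ^ 2 / (s ^ 2 + (m : ℝ) - 1))) =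
      (Real.sqrt m + 1) / 2 := by
  have hm_pos : (0 : ℝ) < m := by exact_mod_cast (by omega : 0 < m)
  have hr := Real.sqrt_pos.2 hm_pos
  have hr_sq := Real.sq_sqrt hm_pos.le
  subst hs
  generalize Real.sqrt m = r at hr hr_sq ⊢
  rw [← hr_sq]
  refine ⟨fun x _ _ => ?_, ?_⟩
  · rw [fast_load_eq hr.le, total_load_eq]
    exact half_le_max_of_add_eq (by ring)
  · rw [balanced_split_eq hr, fast_load_eq hr.le, total_load_eq, mul_balanced_split_eq hr]
    rw [show r + 1 - (r + 1) / 2 = (r + 1) / 2 by ring, max_self]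
end

section
/- For reals t, x with 2/3 ≤ t ≤ 1 and 0 ≤ x ≤ 1, min{2t/(1 + x), 2x/t} ≤ (√(1 + 4t²) − 1)/t ≤ √5 − 1. -/
/-- For reals `t, x` with `2/3 ≤ t ≤ 1` and `0 ≤ x ≤ 1`,
`min{2t/(1 + x), 2x/t} ≤ (√(1 + 4t²) − 1)/t ≤ √5 − 1`. -/
theorem min_ratio_bound (t x : ℝ) (ht1 : 2 / 3 ≤ t) (ht2 : t ≤ 1)
    (hx0 : 0 ≤ x) (hx1 : x ≤ 1) :
    min (2 * t / (1 + x)) (2 * x / t) ≤ (Real.sqrt (1 + 4 * t ^ 2) - 1) / t ∧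
      (Real.sqrt (1 + 4 * t ^ 2) - 1) / t ≤ Real.sqrt 5 - 1 := by
  have ht0 : (0:ℝ) < t := by linarith
  set s := Real.sqrt (1 + 4 * t ^ 2) with hs
  have hsnn : (0:ℝ) ≤ 1 + 4 * t ^ 2 := by positivity
  have hs2 : s ^ 2 = 1 + 4 * t ^ 2 := Real.sq_sqrt hsnn
  have hs1 : 1 ≤ s := by
    rw [show (1:ℝ) = Real.sqrt 1 by simp [Real.sqrt_one]]
    exact Real.sqrt_le_sqrt (by nlinarith)
  constructor
  · rcases le_total x ((s - 1) / 2) with h | h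
    · -- use 2x/t
      refine le_trans (min_le_right _ _) ?_
      rw [div_le_div_iff₀ ht0 ht0]
      nlinarith
    · -- use 2t/(1+x)
      refine le_trans (min_le_left _ _) ?_
      have hx1' : (0:ℝ) < 1 + x := by linarith
      rw [div_le_div_iff₀ hx1' ht0]
      -- 2t * t ≤ (s-1)(1+x); note (s-1)(s+1) = 4t², so (s-1)·(1+x) ≥ (s-1)(1+(s-1)/2) = (s-1)(s+1)/2 = 2t²
      nlinarith [sq_nonneg (s - 1), mul_nonneg (sub_nonneg.mpr hs1) hx0]
  · have h5 : Real.sqrt 5 ^ 2 = 5 := Real.sq_sqrt (by norm_num)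
    have h5pos : (1:ℝ) ≤ Real.sqrt 5 := by nlinarith [Real.sqrt_nonneg 5]
    rw [div_le_iff₀ ht0]
    -- s ≤ 1 + (√5 - 1) t ⟺ 1+4t² ≤ (1+(√5-1)t)², using t ≤ 1
    have key : s ≤ 1 + (Real.sqrt 5 - 1) * t := by
      have hrhs : (0:ℝ) ≤ 1 + (Real.sqrt 5 - 1) * t := by nlinarith
      nlinarith [Real.sqrt_nonneg (1 + 4 * t ^ 2), hs2]
    linarith
end

section
/- Let p₁ ≥ p₂ ≥ ⋯ ≥ pₙ ≥ 0 be processing times and m ≥ 1 machines. Let i₀ be the largest index such that p_{i₀} > (Σ_{j=i₀}^n p_j)/(m − i₀ + 1), or i₀ = 0 if none exists. Define L_i = p_i for 1 ≤ i ≤ i₀ and L_i = (Σ_{j=i₀+1}^n p_j)/(m − i₀) for i₀ < i ≤ m. Then for any nonincreasing nonnegative vector (T₁, …, T_m) satisfying Σ_{k=1}^k p_k ≤ Σ_{k=1}^k T_k for all k ≤ min(m,n) and Σ_{i=1}^m T_i ≥ Σ_{j=1}^n p_j, we have Σ_{i=1}^k L_i ≤ Σ_{i=1}^k T_i for all k =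 1, …, m. -/
/-!
Prefix sums of a nonincreasing vector are concave, so once the MCR prefix sums, which are
affine in `k` beyond `i₀`, are dominated at `k = i₀` (by the top-`i₀` job bound) and at `k = m`
(by conservation of the total load), they are dominated at every `k` in between.
-/

open Finset

lemma sum_Icc_one_add_sum_Ioc {M : Type*} [AddCommMonoid M] (f : ℕ → M) {i k : ℕ}
    (hik : i ≤ k) : ∑ j ∈ Icc 1 i, f j + ∑ j ∈ Ioc i k, f j = ∑ j ∈ Icc 1 k, f j := by
  have hIcc : ∀ x, Icc 1 x = Ioc 0 x := Icc_add_one_left_eq_Ioc 0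
  rw [hIcc, hIcc, sum_Ioc_consecutive f (Nat.zero_le i) hik]

lemma mul_le_sum_Ioc_of_forall_le {f : ℕ → ℝ} {a b : ℕ} {c : ℝ} (hab : a ≤ b)
    (h : ∀ i ∈ Ioc a b, c ≤ f i) : ((b : ℝ) - a) * c ≤ ∑ i ∈ Ioc a b, f i := by
  simpa [Nat.cast_sub hab] using card_nsmul_le_sum (Ioc a b) f c h

lemma sum_Ioc_le_mul_of_forall_le {f : ℕ → ℝ} {a b : ℕ} {c : ℝ} (hab : a ≤ b)
    (h : ∀ i ∈ Ioc a b, f i ≤ c) : ∑ i ∈ Ioc a b, f i ≤ ((b : ℝ) - a) * c := by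
  simpa [Nat.cast_sub hab] using sum_le_card_nsmul (Ioc a b) f c h

theorem add_mul_le_sum_Icc_of_antitoneOn {T : ℕ → ℝ} {m i₀ k : ℕ} {s c : ℝ}
    (hT : AntitoneOn T (Set.Icc 1 m)) (hi₀k : i₀ ≤ k) (hkm : k ≤ m)
    (hstart : s ≤ ∑ i ∈ Icc 1 i₀, T i)
    (hend : s + ((m : ℝ) - i₀) * c ≤ ∑ i ∈ Icc 1 m, T i) :
    s + ((k : ℝ) - i₀) * c ≤ ∑ i ∈ Icc 1 k, T i := by
  rcases hi₀k.eq_or_lt with rfl | hlt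
  · simpa using hstart
  have hk : k ∈ Set.Icc 1 m := ⟨by omega, hkm⟩
  by_cases hc : c ≤ T k
  · have hmid : ((k : ℝ) - i₀) * c ≤ ∑ i ∈ Ioc i₀ k, T i :=
      mul_le_sum_Ioc_of_forall_le hi₀k fun i hi => by
        rw [mem_Ioc] at hi
        exact hc.trans (hT ⟨by omega, by omega⟩ hk hi.2)
    linarith [sum_Icc_one_add_sum_Ioc T hi₀k]
  · have htail : ∑ i ∈ Ioc k m, T i ≤ ((m : ℝ) - k) * c :=
      sum_Ioc_le_mul_of_forall_le hkm fun i hi => by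
        rw [mem_Ioc] at hi
        exact (hT hk ⟨by omega, hi.2⟩ hi.1.le).trans (not_le.mp hc).le
    linarith [sum_Icc_one_add_sum_Ioc T hkm]

theorem mcr_weakly_optimal_general (m n i₀ : ℕ) (p T : ℕ → ℝ)
    (hi₀n : i₀ ≤ n) (hi₀m : i₀ < m)
    (hT : ∀ i j, 1 ≤ i → i ≤ j → j ≤ m → T j ≤ T i)
    (hTk : ∀ k, 1 ≤ k → k ≤ min m n →
      ∑ i ∈ Finset.Icc 1 k, p i ≤ ∑ i ∈ Finset.Icc 1 k, T i)
    (hTP : ∑ j ∈ Finset.Icc 1 n, p j ≤ ∑ i ∈ Finset.Icc 1 m, T i) :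
    ∀ k, 1 ≤ k → k ≤ m →
      ∑ i ∈ Finset.Icc 1 k,
          (if i ≤ i₀ then p i else (∑ j ∈ Finset.Icc (i₀ + 1) n, p j) / ((m : ℝ) - i₀)) ≤
        ∑ i ∈ Finset.Icc 1 k, T i := by
  intro k hk1 hkm
  set c : ℝ := (∑ j ∈ Icc (i₀ + 1) n, p j) / ((m : ℝ) - i₀)
  by_cases hki : k ≤ i₀
  · rw [sum_congr rfl fun i hi => if_pos ((mem_Icc.mp hi).2.trans hki)]
    exact hTk k hk1 (le_min hkm (hki.trans hi₀n))
  have hload : ∑ i ∈ Icc 1 k, (if i ≤ i₀ then p i else c)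
      = ∑ i ∈ Icc 1 i₀, p i + ((k : ℝ) - i₀) * c := by
    rw [← sum_Icc_one_add_sum_Ioc _ (not_le.mp hki).le,
      sum_congr rfl fun i hi => if_pos (mem_Icc.mp hi).2,
      sum_congr rfl fun i hi => if_neg (not_le.mpr (mem_Ioc.mp hi).1)]
    simp [Nat.cast_sub (not_le.mp hki).le]
  have htotal : ∑ i ∈ Icc 1 i₀, p i + ((m : ℝ) - i₀) * c = ∑ j ∈ Icc 1 n, p j := by
    have hpos : (0 : ℝ) < (m : ℝ) - i₀ := sub_pos.mpr (Nat.cast_lt.mpr hi₀m)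
    rw [mul_div_cancel₀ _ hpos.ne', Icc_add_one_left_eq_Ioc, sum_Icc_one_add_sum_Ioc p hi₀n]
  have hstart : ∑ i ∈ Icc 1 i₀, p i ≤ ∑ i ∈ Icc 1 i₀, T i := by
    rcases Nat.eq_zero_or_pos i₀ with h0 | h0
    · simp [h0]
    · exact hTk i₀ h0 (le_min hi₀m.le hi₀n)
  rw [hload]
  exact add_mul_le_sum_Icc_of_antitoneOn (fun i hi j hj hij => hT i j hi.1 hij hj.2)
    (not_le.mp hki).le hkm hstart (htotal ▸ hTP)

/-- Weak optimality of the MCR (modified McNaughton) schedule for preemptive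
scheduling on identical machines.  With `p₁ ≥ ⋯ ≥ pₙ ≥ 0`, `i₀` the largest index
with `p_{i₀} > (Σ_{j=i₀}^n p_j)/(m − i₀ + 1)` (or `i₀ = 0`), and loads
`L_i = p_i` for `i ≤ i₀`, `L_i = (Σ_{j=i₀+1}^n p_j)/(m − i₀)` for `i₀ < i ≤ m`,
every nonincreasing nonnegative vector `T` whose top-`k` prefix sums dominate
those of `p` and whose total is at least `Σ p` satisfies
`Σ_{i≤k} L_i ≤ Σ_{i≤k} T_i` for every `k ≤ m`. -/
theorem mcr_weakly_optimal (m n i₀ : ℕ) (p T : ℕ → ℝ)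
    (hm : 1 ≤ m) (hi₀n : i₀ ≤ n) (hi₀m : i₀ < m)
    (hp0 : ∀ i, 1 ≤ i → i ≤ n → 0 ≤ p i)
    (hp : ∀ i j, 1 ≤ i → i ≤ j → j ≤ n → p j ≤ p i)
    (hprop : 1 ≤ i₀ →
      (∑ j ∈ Finset.Icc i₀ n, p j) / ((m : ℝ) - i₀ + 1) < p i₀)
    (hmax : ∀ i, i₀ < i → i ≤ min m n →
      p i ≤ (∑ j ∈ Finset.Icc i n, p j) / ((m : ℝ) - i + 1))
    (hT : ∀ i j, 1 ≤ i → i ≤ j → j ≤ m → T j ≤ T i)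
    (hT0 : ∀ i, 1 ≤ i → i ≤ m → 0 ≤ T i)
    (hTk : ∀ k, 1 ≤ k → k ≤ min m n →
      ∑ i ∈ Finset.Icc 1 k, p i ≤ ∑ i ∈ Finset.Icc 1 k, T i)
    (hTP : ∑ j ∈ Finset.Icc 1 n, p j ≤ ∑ i ∈ Finset.Icc 1 m, T i) :
    ∀ k, 1 ≤ k → k ≤ m →
      ∑ i ∈ Finset.Icc 1 k,
          (if i ≤ i₀ then p i else (∑ j ∈ Finset.Icc (i₀ + 1) n, p j) / ((m : ℝ) - i₀)) ≤
        ∑ i ∈ Finset.Icc 1 k, T i :=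
  mcr_weakly_optimal_general m n i₀ p T hi₀n hi₀m hT hTk hTP
end
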